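/- Complex S-lemma: Let A₁, A₂ be n×n Hermitian complex matrices, b₁, b₂ ∈ ℂⁿ, and c₁, c₂ ∈ ℝ, and for m = 1, 2 define the quadratic functions f_m(x) = xᴴ A_m x + 2 Re(b_mᴴ x) + c_m (which are real-valued since A_m is Hermitian). Assume the Slater condition: there exists x̂ ∈ ℂⁿ with f₁(x̂) > 0. Then the implication ‘for all x ∈ ℂⁿ, f₁(x) ≥ 0 implies f₂(x) ≥ 0’ holds if and only if there exists λ ≥ 0 such that the (n+1)×(n+1) block matrix [[A₂, b₂], [b₂ᴴ, c₂]] − λ·[[A₁, b₁], [b₁ᴴ, c₁]] is positive semidefinite. -/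

import Mathlib

/-!
Write `Mₘ = [[Aₘ, bₘ], [bₘᴴ, cₘ]]`, so that `fₘ x` is the Hermitian form of `Mₘ` at `(x, 1)`.
With the Slater point, the implication `f₁ ≥ 0 → f₂ ≥ 0` extends from the hyperplane `t = 1`
to all of `ℂⁿ⁺¹`: by homogeneity where `t ≠ 0`, and where `t = 0` by perturbing towards the
Slater point and passing to the limit.

For Hermitian forms `q₁, q₂` with `q₁ ≥ 0 → q₂ ≥ 0`, let `q₁ z ≤ 0 ≤ q₁ w`. A phase `μ` can be
chosen to kill the `q₁`-cross term of `z` and `μ w`; then both `√(q₁ w) z ± √(-q₁ z) μ w` lie on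
the cone `q₁ = 0`, and averaging the two values of `q₂` there gives
`q₁ z * q₂ w ≤ q₁ w * q₂ z`. This crossing inequality is exactly what makes
`λ = inf {q₂ w / q₁ w | q₁ w > 0}` satisfy `λ q₁ ≤ q₂` everywhere, i.e. `M₂ - λ M₁ ⪰ 0`.
-/

open Matrix ComplexOrder

/-- The Hermitian block matrix `[[A, b], [bᴴ, c]]`. -/
noncomputable def blockMat {n : ℕ} (A : Matrix (Fin n) (Fin n) ℂ) (b : Fin n → ℂ) (c : ℝ) :
    Matrix (Fin n ⊕ Fin 1) (Fin n ⊕ Fin 1) ℂ :=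
  Matrix.fromBlocks A (Matrix.of fun i _ => b i) (Matrix.of fun _ j => star (b j))
    (Matrix.of fun _ _ => (c : ℂ))

open Filter Topology

lemma Complex.exists_normSq_eq_one_re_mul_eq_zero (c : ℂ) :
    ∃ μ : ℂ, Complex.normSq μ = 1 ∧ (μ * c).re = 0 := by
  set θ := arg c
  refine ⟨I * exp (↑(-θ) * I), by simp [normSq_eq_norm_sq, norm_exp], ?_⟩
  rw [← norm_mul_exp_arg_mul_I c, show I * exp (↑(-θ) * I) * (‖c‖ * exp (θ * I)) =
    I * ‖c‖ * exp (↑(-θ) * I + θ * I) by rw [exp_add]; ring]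
  simp

theorem exists_nonneg_mul_le_of_mul_le_mul {α : Type*} {f g : α → ℝ} (hslater : ∃ x, 0 < f x)
    (himp : ∀ x, 0 ≤ f x → 0 ≤ g x)
    (hcross : ∀ x y, f x < 0 → 0 < f y → f x * g y ≤ f y * g x) :
    ∃ lam : ℝ, 0 ≤ lam ∧ ∀ x, lam * f x ≤ g x := by
  set S := (fun y => g y / f y) '' {y | 0 < f y}
  have hS : S.Nonempty := let ⟨y, hy⟩ := hslater; ⟨_, y, hy, rfl⟩
  have hS0 : ∀ s ∈ S, 0 ≤ s := by
    rintro _ ⟨y, hy, rfl⟩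
    exact div_nonneg (himp y hy.le) hy.le
  refine ⟨sInf S, le_csInf hS hS0, fun x => ?_⟩
  rcases lt_trichotomy (f x) 0 with hx | hx | hx
  · have : g x / f x ≤ sInf S := le_csInf hS <| by
      rintro _ ⟨y, hy, rfl⟩
      rw [div_le_iff_of_neg hx, div_mul_eq_mul_div, div_le_iff₀ hy]
      linarith [hcross x y hx hy]
    exact (div_le_iff_of_neg hx).1 this
  · simpa [hx] using himp x hx.ge
  · have : sInf S ≤ g x / f x := csInf_le ⟨0, hS0⟩ ⟨x, hx, rfl⟩
    exact (le_div_iff₀ hx).1 this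

namespace Matrix

variable {ι : Type*} [Fintype ι]

noncomputable def quadForm (M : Matrix ι ι ℂ) (z : ι → ℂ) : ℝ := (star z ⬝ᵥ M *ᵥ z).re

lemma continuous_quadForm (M : Matrix ι ι ℂ) : Continuous (quadForm M) :=
  Complex.continuous_re.comp <| continuous_id.star.dotProduct <|
    continuous_const.matrix_mulVec continuous_id

lemma quadForm_smul (M : Matrix ι ι ℂ) (c : ℂ) (z : ι → ℂ) :
    quadForm M (c • z) = Complex.normSq c * quadForm M z := by
  simp only [quadForm, star_smul, mulVec_smul, smul_dotProduct, dotProduct_smul, smul_eq_mul,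
    ← mul_assoc, Complex.star_def, Complex.mul_conj, Complex.re_ofReal_mul]

lemma quadForm_neg (M : Matrix ι ι ℂ) (z : ι → ℂ) : quadForm M (-z) = quadForm M z := by
  simp [quadForm, mulVec_neg]

lemma quadForm_sub_smul (M N : Matrix ι ι ℂ) (r : ℝ) (z : ι → ℂ) :
    quadForm (M - (r : ℂ) • N) z = quadForm M z - r * quadForm N z := by
  simp [quadForm, sub_mulVec, smul_mulVec]

variable {M : Matrix ι ι ℂ}

lemma IsHermitian.quadForm_add (hM : M.IsHermitian) (z w : ι → ℂ) :
    quadForm M (z + w) = quadForm M z + quadForm M w + 2 * (star z ⬝ᵥ M *ᵥ w).re := by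
  have hswap : star w ⬝ᵥ M *ᵥ z = star (star z ⬝ᵥ M *ᵥ w) := by
    rw [star_dotProduct, star_mulVec, hM.eq, dotProduct_mulVec]
  simp only [quadForm, star_add, add_dotProduct, mulVec_add, dotProduct_add, Complex.add_re, hswap,
    Complex.star_def, Complex.conj_re]
  ring

lemma IsHermitian.quadForm_smul_add_smul (hM : M.IsHermitian) (a b : ℝ) (z w : ι → ℂ) :
    quadForm M ((a : ℂ) • z + (b : ℂ) • w) =
      a ^ 2 * quadForm M z + b ^ 2 * quadForm M w + 2 * a * b * (star z ⬝ᵥ M *ᵥ w).re := by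
  rw [hM.quadForm_add, quadForm_smul, quadForm_smul]
  simp only [star_smul, mulVec_smul, smul_dotProduct, dotProduct_smul, smul_eq_mul,
    Complex.star_def, Complex.conj_ofReal, Complex.normSq_ofReal, ← mul_assoc,
    ← Complex.ofReal_mul, Complex.re_ofReal_mul]
  ring

lemma IsHermitian.posSemidef_iff_quadForm_nonneg (hM : M.IsHermitian) :
    M.PosSemidef ↔ ∀ z, 0 ≤ quadForm M z := by
  simp only [posSemidef_iff_dotProduct_mulVec, hM, true_and, quadForm, Complex.nonneg_iff]
  exact forall_congr' fun z =>
    and_iff_left (by simpa using (hM.im_star_dotProduct_mulVec_self z).symm)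

variable {M₁ M₂ : Matrix ι ι ℂ}

theorem IsHermitian.quadForm_mul_le_mul (h₁ : M₁.IsHermitian) (h₂ : M₂.IsHermitian)
    (himp : ∀ z, 0 ≤ quadForm M₁ z → 0 ≤ quadForm M₂ z) {z w : ι → ℂ}
    (hz : quadForm M₁ z ≤ 0) (hw : 0 ≤ quadForm M₁ w) :
    quadForm M₁ z * quadForm M₂ w ≤ quadForm M₁ w * quadForm M₂ z := by
  obtain ⟨μ, hμ, hμre⟩ := Complex.exists_normSq_eq_one_re_mul_eq_zero (star z ⬝ᵥ M₁ *ᵥ w)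
  have hμw : ∀ M, quadForm M (μ • w) = quadForm M w := by simp [quadForm_smul, hμ]
  have hcross₁ : (star z ⬝ᵥ M₁ *ᵥ (μ • w)).re = 0 := by simpa [mulVec_smul] using hμre
  set a := √(quadForm M₁ w)
  set b := √(-quadForm M₁ z)
  have ha : a ^ 2 = quadForm M₁ w := Real.sq_sqrt hw
  have hb : b ^ 2 = -quadForm M₁ z := Real.sq_sqrt (neg_nonneg.2 hz)
  have hcone : ∀ s : ℝ, s ^ 2 = b ^ 2 → 0 ≤ a ^ 2 * quadForm M₂ z + s ^ 2 * quadForm M₂ w +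
      2 * a * s * (star z ⬝ᵥ M₂ *ᵥ (μ • w)).re := by
    intro s hs
    rw [← hμw, ← h₂.quadForm_smul_add_smul]
    refine himp _ (le_of_eq ?_)
    rw [h₁.quadForm_smul_add_smul, hμw, hcross₁, hs, ha, hb]
    ring
  have hplus := hcone b rfl
  have hminus := hcone (-b) (neg_sq b)
  rw [neg_sq, hb, ha] at hminus
  rw [hb, ha] at hplus
  linarith

theorem IsHermitian.quadForm_imp_iff_exists_posSemidef (h₁ : M₁.IsHermitian)
    (h₂ : M₂.IsHermitian) (hslater : ∃ z, 0 < quadForm M₁ z) :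
    (∀ z, 0 ≤ quadForm M₁ z → 0 ≤ quadForm M₂ z) ↔
      ∃ lam : ℝ, 0 ≤ lam ∧ (M₂ - (lam : ℂ) • M₁).PosSemidef := by
  constructor
  · intro himp
    obtain ⟨lam, hlam, hle⟩ := exists_nonneg_mul_le_of_mul_le_mul hslater himp
      fun z w hz hw => h₁.quadForm_mul_le_mul h₂ himp hz.le hw.le
    have hherm : (M₂ - (lam : ℂ) • M₁).IsHermitian :=
      h₂.sub (h₁.smul (Complex.conj_ofReal lam))
    refine ⟨lam, hlam, hherm.posSemidef_iff_quadForm_nonneg.2 fun z => ?_⟩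
    rw [quadForm_sub_smul]
    linarith [hle z]
  · rintro ⟨lam, hlam, hpsd⟩ z hz
    have := hpsd.1.posSemidef_iff_quadForm_nonneg.1 hpsd z
    rw [quadForm_sub_smul] at this
    nlinarith [mul_nonneg hlam hz]

theorem quadForm_imp_of_coord_ne_zero (i : ι)
    (himp : ∀ z, z i = 1 → 0 ≤ quadForm M₁ z → 0 ≤ quadForm M₂ z) {z : ι → ℂ} (hzi : z i ≠ 0)
    (hz : 0 ≤ quadForm M₁ z) : 0 ≤ quadForm M₂ z := by
  have hnormSq : 0 < Complex.normSq (z i) := Complex.normSq_pos.2 hzi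
  have hscale : z = z i • ((z i)⁻¹ • z) := by rw [smul_smul, mul_inv_cancel₀ hzi, one_smul]
  rw [hscale, quadForm_smul] at hz ⊢
  exact mul_nonneg hnormSq.le <|
    himp _ (by simp [inv_mul_cancel₀ hzi]) ((mul_nonneg_iff_of_pos_left hnormSq).1 hz)

theorem IsHermitian.quadForm_imp_of_coord_eq_zero (h₁ : M₁.IsHermitian) (i : ι) {z₀ : ι → ℂ}
    (hz₀i : z₀ i ≠ 0) (hz₀ : 0 ≤ quadForm M₁ z₀)
    (himp : ∀ z, z i ≠ 0 → 0 ≤ quadForm M₁ z → 0 ≤ quadForm M₂ z) {z : ι → ℂ} (hzi : z i = 0)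
    (hz : 0 ≤ quadForm M₁ z) : 0 ≤ quadForm M₂ z := by
  obtain ⟨w, hwi, hw, hcross⟩ :
      ∃ w : ι → ℂ, w i ≠ 0 ∧ 0 ≤ quadForm M₁ w ∧ 0 ≤ (star z ⬝ᵥ M₁ *ᵥ w).re := by
    rcases le_total 0 (star z ⬝ᵥ M₁ *ᵥ z₀).re with h | h
    · exact ⟨z₀, hz₀i, hz₀, h⟩
    · exact ⟨-z₀, by simpa using hz₀i, by rwa [quadForm_neg], by simpa [mulVec_neg] using h⟩
  have hpos : ∀ s : ℝ, 0 < s → 0 ≤ quadForm M₂ (z + (s : ℂ) • w) := by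
    intro s hs
    refine himp _ (by simp [hzi, hs.ne', hwi]) ?_
    have := h₁.quadForm_smul_add_smul 1 s z w
    simp only [Complex.ofReal_one, one_smul] at this
    rw [this]
    positivity
  have hlim : Tendsto (fun s : ℝ => quadForm M₂ (z + (s : ℂ) • w)) (𝓝[>] 0)
      (𝓝 (quadForm M₂ z)) := by
    have hcont : Continuous fun s : ℝ => quadForm M₂ (z + (s : ℂ) • w) :=
      (continuous_quadForm M₂).comp (by fun_prop)
    simpa using (hcont.tendsto 0).mono_left nhdsWithin_le_nhds
  exact ge_of_tendsto hlim (eventually_nhdsWithin_of_forall hpos)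

theorem IsHermitian.quadForm_imp_iff_of_coord_eq_one (h₁ : M₁.IsHermitian) (i : ι)
    (hslater : ∃ z₀ : ι → ℂ, z₀ i = 1 ∧ 0 ≤ quadForm M₁ z₀) :
    (∀ z, z i = 1 → 0 ≤ quadForm M₁ z → 0 ≤ quadForm M₂ z) ↔
      ∀ z, 0 ≤ quadForm M₁ z → 0 ≤ quadForm M₂ z := by
  refine ⟨fun himp z hz => ?_, fun himp z _ => himp z⟩
  obtain ⟨z₀, hz₀i, hz₀⟩ := hslater
  by_cases hzi : z i = 0
  · exact h₁.quadForm_imp_of_coord_eq_zero i (by simp [hz₀i]) hz₀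
      (fun _ => quadForm_imp_of_coord_ne_zero i himp) hzi hz
  · exact quadForm_imp_of_coord_ne_zero i himp hzi hz

end Matrix

lemma blockMat_isHermitian {n : ℕ} {A : Matrix (Fin n) (Fin n) ℂ} (hA : A.IsHermitian)
    (b : Fin n → ℂ) (c : ℝ) : (blockMat A b c).IsHermitian :=
  hA.fromBlocks (by ext; simp) (by ext; simp)

lemma quadForm_blockMat_sumElim_one {n : ℕ} (A : Matrix (Fin n) (Fin n) ℂ) (b : Fin n → ℂ)
    (c : ℝ) (x : Fin n → ℂ) :
    quadForm (blockMat A b c) (Sum.elim x 1) =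
      (star x ⬝ᵥ A *ᵥ x).re + 2 * (star b ⬝ᵥ x).re + c := by
  have hform : star (Sum.elim x 1) ⬝ᵥ blockMat A b c *ᵥ Sum.elim x 1 =
      star x ⬝ᵥ A *ᵥ x + star (star b ⬝ᵥ x) + star b ⬝ᵥ x + c := by
    simp only [blockMat, fromBlocks_mulVec, Function.star_sumElim, sumElim_dotProduct_sumElim,
      dotProduct_add, ← star_dotProduct, Sum.elim_comp_inl, Sum.elim_comp_inr]
    simp [mulVec, dotProduct, add_assoc]
  rw [quadForm, hform]
  simp only [Complex.add_re, Complex.star_def, Complex.conj_re, Complex.ofReal_re]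
  ring

lemma forall_sumElim_one_iff {m R : Type*} [One R] {P : (m ⊕ Fin 1 → R) → Prop} :
    (∀ z : m ⊕ Fin 1 → R, z (Sum.inr 0) = 1 → P z) ↔ ∀ x : m → R, P (Sum.elim x 1) := by
  refine ⟨fun h x => h _ rfl, fun h z hz => ?_⟩
  convert h (z ∘ Sum.inl)
  ext (i | i)
  · rfl
  · simp [Fin.fin_one_eq_zero i, hz]

/-- Complex S-lemma. -/
theorem complex_S_lemma {n : ℕ} (A₁ A₂ : Matrix (Fin n) (Fin n) ℂ)
    (hA₁ : A₁.IsHermitian) (hA₂ : A₂.IsHermitian)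
    (b₁ b₂ : Fin n → ℂ) (c₁ c₂ : ℝ)
    (f₁ f₂ : (Fin n → ℂ) → ℝ)
    (hf₁ : ∀ x, f₁ x = (star x ⬝ᵥ A₁ *ᵥ x).re + 2 * (star b₁ ⬝ᵥ x).re + c₁)
    (hf₂ : ∀ x, f₂ x = (star x ⬝ᵥ A₂ *ᵥ x).re + 2 * (star b₂ ⬝ᵥ x).re + c₂)
    (hSlater : ∃ xhat : Fin n → ℂ, 0 < f₁ xhat) :
    (∀ x : Fin n → ℂ, 0 ≤ f₁ x → 0 ≤ f₂ x) ↔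
      ∃ lam : ℝ, 0 ≤ lam ∧
        (blockMat A₂ b₂ c₂ - (lam : ℂ) • blockMat A₁ b₁ c₁).PosSemidef := by
  have hM₁ := blockMat_isHermitian hA₁ b₁ c₁
  have hM₂ := blockMat_isHermitian hA₂ b₂ c₂
  have hf : ∀ x, f₁ x = quadForm (blockMat A₁ b₁ c₁) (Sum.elim x 1) ∧
      f₂ x = quadForm (blockMat A₂ b₂ c₂) (Sum.elim x 1) := fun x => by
    simp only [hf₁, hf₂, quadForm_blockMat_sumElim_one, and_self]
  obtain ⟨x₀, hx₀⟩ := hSlater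
  have hslater : ∃ z₀ : Fin n ⊕ Fin 1 → ℂ,
      z₀ (Sum.inr 0) = 1 ∧ 0 < quadForm (blockMat A₁ b₁ c₁) z₀ :=
    ⟨Sum.elim x₀ 1, rfl, (hf x₀).1 ▸ hx₀⟩
  rw [← hM₁.quadForm_imp_iff_exists_posSemidef hM₂ (hslater.imp fun _ => And.right),
    ← hM₁.quadForm_imp_iff_of_coord_eq_one _ (hslater.imp fun _ h => ⟨h.1, h.2.le⟩),
    forall_sumElim_one_iff]
  simp only [hf]
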